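/- Let p and q be distinct primes. The zero divisor graph Γ[Z_{pq}] of the ring Z/pqZ is Eulerian if and only if both p and q are odd. -/

import Mathlib

open SimpleGraph

/-- The vertex type of the zero divisor graph of `ZMod n`:
the nonzero zero divisors of `ZMod n`. -/
def ZDVertex (n : ℕ) : Type :=
  {x : ZMod n // x ≠ 0 ∧ ∃ y : ZMod n, y ≠ 0 ∧ x * y = 0}

instance (n : ℕ) : DecidableEq (ZDVertex n) :=
  fun a b => decidable_of_iff (a.val = b.val) Subtype.val_inj

/-- The zero divisor graph `Γ[ZMod n]`: vertices are the nonzero zero divisors of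
`ZMod n`, and two distinct vertices are adjacent iff their product is zero. -/
def zeroDivisorGraph (n : ℕ) : SimpleGraph (ZDVertex n) where
  Adj a b := a ≠ b ∧ (a.val * b.val = 0)
  symm := by
    constructor
    rintro a b ⟨hab, h⟩
    exact ⟨hab.symm, by rwa [mul_comm]⟩
  loopless := by
    constructor
    rintro a ⟨ha, -⟩
    exact ha rfl

/-- A graph is Eulerian if it has an Euler tour: a closed walk of positive length
traversing each edge exactly once. -/
def SimpleGraph.IsEulerianGraph {V : Type*} [DecidableEq V] (G : SimpleGraph V) : Prop :=
  ∃ (v : V) (w : G.Walk v v), w.IsEulerian ∧ 0 < w.length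

set_option linter.unusedSectionVars false

instance ZDVertex.instFintype (n : ℕ) [NeZero n] : Fintype (ZDVertex n) := by
  unfold ZDVertex; infer_instance

instance (n : ℕ) : DecidableRel (zeroDivisorGraph n).Adj :=
  fun a b => decidable_of_iff (a ≠ b ∧ (a.val * b.val = 0)) Iff.rfl

section Abstract
variable {V : Type*} [DecidableEq V] {G : SimpleGraph V}

/-- zigzag walk between `a0` and `a1` through an odd list of common neighbors. -/
lemma zdg_zig_exists (a0 a1 : V) :
    ∀ t : ℕ, ∀ bs : List V, bs.length = 2*t+1 →
    (∀ b ∈ bs, G.Adj a0 b) → (∀ b ∈ bs, G.Adj a1 b) →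
    ∃ w : G.Walk a0 a1, w.edges.Perm (bs.flatMap (fun b => [s(a0,b), s(a1,b)])) := by
  intro t
  induction t with
  | zero =>
    rintro (_|⟨b, (_|⟨b', r⟩)⟩) hlen h0 h1 <;> simp at hlen
    refine ⟨Walk.cons (h0 b (by simp)) (Walk.cons (h1 b (by simp)).symm Walk.nil), ?_⟩
    simp [Sym2.eq_swap]
  | succ t ih =>
    rintro (_|⟨b, (_|⟨b', r⟩)⟩) hlen h0 h1 <;> simp at hlen
    obtain ⟨w, hw⟩ := ih r (by omega) (fun x hx => h0 x (by simp [hx]))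
      (fun x hx => h1 x (by simp [hx]))
    refine ⟨Walk.cons (h0 b (by simp)) (Walk.cons (h1 b (by simp)).symm
      (Walk.cons (h1 b' (by simp)) (Walk.cons (h0 b' (by simp)).symm w))), ?_⟩
    simp only [Walk.edges_cons, List.flatMap_cons, List.cons_append, List.nil_append]
    rw [Sym2.eq_swap (a := b) (b := a1), Sym2.eq_swap (a := b') (b := a0)]
    refine (List.Perm.cons _ (List.Perm.cons _ ?_))
    exact (List.Perm.cons _ (List.Perm.cons _ hw)).trans (List.Perm.swap _ _ _)

lemma zdg_interleave_perm {β : Type*} (f g : V → β) (L : List V) :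
    (L.flatMap (fun b => [f b, g b])).Perm (L.map f ++ L.map g) := by
  induction L with
  | nil => simp
  | cons b L ih =>
    simp only [List.flatMap_cons, List.map_cons, List.cons_append]
    refine List.Perm.cons _ ?_
    exact (List.Perm.cons _ ih).trans (List.perm_middle).symm

/-- closed walk based at `b0` covering all edges between `{a0,a1}` and `b0::bs`. -/
lemma zdg_pair_exists (b0 a0 a1 : V) (bs : List V) (t : ℕ) (hlen : bs.length = 2*t+1)
    (h0 : ∀ b ∈ b0::bs, G.Adj a0 b) (h1 : ∀ b ∈ b0::bs, G.Adj a1 b) :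
    ∃ w : G.Walk b0 b0,
      w.edges.Perm ((b0::bs).map (fun b => s(a0,b)) ++ (b0::bs).map (fun b => s(a1,b))) := by
  obtain ⟨z, hz⟩ := zdg_zig_exists a0 a1 t bs hlen
    (fun b hb => h0 b (by simp [hb])) (fun b hb => h1 b (by simp [hb]))
  refine ⟨Walk.cons (h0 b0 (by simp)).symm (z.append (Walk.cons (h1 b0 (by simp)) Walk.nil)), ?_⟩
  simp only [Walk.edges_cons, Walk.edges_append, Walk.edges_nil]
  rw [Sym2.eq_swap (a := b0) (b := a0)]
  refine List.Perm.trans ?_ (zdg_interleave_perm (fun b => s(a0,b)) (fun b => s(a1,b)) (b0::bs))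
  simp only [List.flatMap_cons]
  refine List.Perm.cons _ ?_
  exact ((hz.append_right [s(a1,b0)]).trans (List.perm_append_singleton _ _)).trans
    (List.Perm.refl _)

/-- the canonical edge list of a complete bipartite graph with parts `A`, `B`. -/
def zdgEL (A B : List V) : List (Sym2 V) := A.flatMap (fun a => B.map (fun b => s(a,b)))

lemma zdg_circuit_exists (b0 : V) (bs : List V) (tb : ℕ) (hlen : bs.length = 2*tb+1) :
    ∀ ta : ℕ, ∀ A : List V, A.length = 2*ta →
    (∀ a ∈ A, ∀ b ∈ b0::bs, G.Adj a b) →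
    ∃ w : G.Walk b0 b0, w.edges.Perm (zdgEL A (b0::bs)) := by
  intro ta
  induction ta with
  | zero =>
    rintro (_|⟨a, A⟩) hA hadj <;> simp at hA
    exact ⟨Walk.nil, by simp [zdgEL]⟩
  | succ ta ih =>
    intro A0 hA hadj
    obtain ⟨a0, a1, A, rfl⟩ : ∃ a0 a1 A, A0 = a0::a1::A := by
      match A0, hA with
      | [], hA => simp at hA
      | [a0], hA => simp at hA; omega
      | a0::a1::A, _ => exact ⟨a0, a1, A, rfl⟩
    simp only [List.length_cons] at hA
    obtain ⟨w, hw⟩ := ih A (by omega) (fun a ha => hadj a (by simp [ha]))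
    obtain ⟨w2, hw2⟩ := zdg_pair_exists b0 a0 a1 bs tb hlen
      (hadj a0 (by simp)) (hadj a1 (by simp))
    refine ⟨w2.append w, ?_⟩
    rw [Walk.edges_append]
    have : zdgEL (a0::a1::A) (b0::bs)
        = ((b0::bs).map (fun b => s(a0,b)) ++ (b0::bs).map (fun b => s(a1,b))) ++ zdgEL A (b0::bs) := by
      simp [zdgEL, List.append_assoc]
    rw [this]
    exact hw2.append hw

lemma zdg_EL_nodup (A B : List V) (hA : A.Nodup) (hB : B.Nodup)
    (hd : ∀ a ∈ A, a ∉ B) : (zdgEL A B).Nodup := by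
  rw [zdgEL, List.nodup_flatMap]
  constructor
  · intro a ha
    refine hB.map_on ?_
    intro b hb b' hb' he
    rcases Sym2.eq_iff.mp he with ⟨-, h⟩ | ⟨h1, h2⟩
    · exact h
    · exact absurd (h1 ▸ hb') (hd a ha)
  · refine List.Pairwise.imp_of_mem ?_ hA
    intro a a' ha ha' hne e he he'
    simp only [List.mem_map] at he he'
    obtain ⟨b, hb, rfl⟩ := he
    obtain ⟨b', hb', hee⟩ := he'
    rcases Sym2.eq_iff.mp hee.symm with ⟨h1, -⟩ | ⟨h1, h2⟩
    · exact hne h1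
    · exact (hd a' ha') (h2 ▸ hb)

lemma zdg_EL_mem (A B : List V) {a b : V} (ha : a ∈ A) (hb : b ∈ B) :
    s(a,b) ∈ zdgEL A B := by
  rw [zdgEL, List.mem_flatMap]
  exact ⟨a, ha, List.mem_map_of_mem hb⟩

lemma zdg_eulerian_of_bipartite (A B : List V) (hA : A.Nodup) (hB : B.Nodup)
    (hd : ∀ a ∈ A, a ∉ B)
    (hadj : ∀ a ∈ A, ∀ b ∈ B, G.Adj a b)
    (hcov : ∀ e ∈ G.edgeSet, ∃ a ∈ A, ∃ b ∈ B, e = s(a,b))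
    (hAe : Even A.length) (hBe : Even B.length)
    (hA0 : A ≠ []) (hB0 : B ≠ []) : G.IsEulerianGraph := by
  obtain ⟨b0, bs, rfl⟩ : ∃ b0 bs, B = b0 :: bs := by
    cases B with
    | nil => exact absurd rfl hB0
    | cons b bs => exact ⟨b, bs, rfl⟩
  obtain ⟨a0, as, rfl⟩ : ∃ a0 as, A = a0 :: as := by
    cases A with
    | nil => exact absurd rfl hA0
    | cons a as => exact ⟨a, as, rfl⟩
  obtain ⟨tb, htb⟩ : ∃ tb, bs.length = 2*tb+1 := by
    obtain ⟨k, hk⟩ := hBe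
    simp only [List.length_cons] at hk
    exact ⟨k-1, by omega⟩
  obtain ⟨ta, hta⟩ : ∃ ta, (a0::as).length = 2*ta := by
    obtain ⟨k, hk⟩ := hAe
    exact ⟨k, by omega⟩
  obtain ⟨w, hw⟩ := zdg_circuit_exists b0 bs tb htb ta (a0::as) hta hadj
  refine ⟨b0, w, ?_, ?_⟩
  · rw [Walk.isEulerian_iff]
    constructor
    · rw [Walk.isTrail_def]
      exact hw.nodup_iff.mpr (zdg_EL_nodup _ _ hA hB hd)
    · intro e he
      obtain ⟨a, ha, b, hb, rfl⟩ := hcov e he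
      exact hw.mem_iff.mpr (zdg_EL_mem _ _ ha hb)
  · have h1 : s(a0, b0) ∈ w.edges :=
      hw.mem_iff.mpr (zdg_EL_mem _ _ (by simp) (by simp))
    have := w.length_edges
    have h2 : w.edges ≠ [] := List.ne_nil_of_mem h1
    have := List.length_pos_iff.mpr h2
    omega

end Abstract


section Concrete

variable {d e : ℕ} (hd : d.Prime) (he : e.Prime) (hde : d ≠ e)

include hd he in
lemma zdg_ne_zero : NeZero (d*e) := ⟨Nat.mul_ne_zero hd.ne_zero he.ne_zero⟩

/-- `x.val * y.val = 0` in `ZMod n` iff `n` divides the product of natural values. -/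
lemma zdg_mul_eq_zero_iff {n : ℕ} [NeZero n] (x y : ZMod n) :
    x * y = 0 ↔ n ∣ x.val * y.val := by
  rw [← ZMod.natCast_eq_zero_iff, Nat.cast_mul, ZMod.natCast_zmod_val,
    ZMod.natCast_zmod_val]

include hd he hde in
lemma zdg_adj_of_dvd {x y : ZDVertex (d*e)} (hx : d ∣ x.val.val) (hy : e ∣ y.val.val) :
    (zeroDivisorGraph (d*e)).Adj x y := by
  haveI := zdg_ne_zero hd he
  have hco : Nat.Coprime d e := (Nat.coprime_primes hd he).mpr hde
  constructor
  · rintro rfl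
    have : d * e ∣ x.val.val :=
      Nat.Coprime.mul_dvd_of_dvd_of_dvd hco hx hy
    have h0 : x.val.val = 0 := Nat.eq_zero_of_dvd_of_lt this (ZMod.val_lt x.val)
    exact x.2.1 ((ZMod.val_eq_zero x.val).mp h0)
  · rw [zdg_mul_eq_zero_iff]
    exact Nat.Coprime.mul_dvd_of_dvd_of_dvd hco (hx.mul_right _) (hy.mul_left _)

include hd he in
lemma zdg_nat_split {a b : ℕ} (ha0 : a ≠ 0) (hb0 : b ≠ 0) (haLT : a < d*e) (hbLT : b < d*e)
    (hmul : d*e ∣ a*b) : (d ∣ a ∧ e ∣ b) ∨ (e ∣ a ∧ d ∣ b) := by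
  have hdab : d ∣ a * b := dvd_trans ⟨e, rfl⟩ hmul
  rcases (Nat.Prime.dvd_mul hd).mp hdab with hda | hdb
  · left
    refine ⟨hda, ?_⟩
    obtain ⟨a', rfl⟩ := hda
    have : e ∣ a' * b := by
      rw [mul_assoc] at hmul
      exact (Nat.mul_dvd_mul_iff_left hd.pos).mp hmul
    rcases (Nat.Prime.dvd_mul he).mp this with h1 | h1
    · exfalso
      obtain ⟨a'', rfl⟩ := h1
      exact ha0 (Nat.eq_zero_of_dvd_of_lt ⟨a'', by ring⟩ haLT)
    · exact h1
  · right
    refine ⟨?_, hdb⟩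
    obtain ⟨b', rfl⟩ := hdb
    have : e ∣ a * b' := by
      rw [show a * (d * b') = d * (a * b') by ring] at hmul
      exact (Nat.mul_dvd_mul_iff_left hd.pos).mp hmul
    rcases (Nat.Prime.dvd_mul he).mp this with h1 | h1
    · exact h1
    · exfalso
      obtain ⟨b'', rfl⟩ := h1
      exact hb0 (Nat.eq_zero_of_dvd_of_lt ⟨b'', by ring⟩ hbLT)

include hd he in
lemma zdg_adj_dvd {x y : ZDVertex (d*e)} (h : (zeroDivisorGraph (d*e)).Adj x y) :
    (d ∣ x.val.val ∧ e ∣ y.val.val) ∨ (e ∣ x.val.val ∧ d ∣ y.val.val) := by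
  haveI := zdg_ne_zero hd he
  obtain ⟨-, hmul⟩ := h
  rw [zdg_mul_eq_zero_iff] at hmul
  have ha0 : x.val.val ≠ 0 := fun h0 => x.2.1 ((ZMod.val_eq_zero x.val).mp h0)
  have hb0 : y.val.val ≠ 0 := fun h0 => y.2.1 ((ZMod.val_eq_zero y.val).mp h0)
  exact zdg_nat_split hd he ha0 hb0 (ZMod.val_lt x.val) (ZMod.val_lt y.val) hmul

include hd he hde in
lemma zdg_prop (m : ℕ) (hdm : d ∣ m) (h0 : m ≠ 0) (hlt : m < d*e) :
    ((m : ZMod (d*e)) ≠ 0 ∧ ∃ y : ZMod (d*e), y ≠ 0 ∧ (m : ZMod (d*e)) * y = 0) := by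
  haveI := zdg_ne_zero hd he
  constructor
  · rw [Ne, ZMod.natCast_eq_zero_iff]
    intro hdvd
    exact h0 (Nat.eq_zero_of_dvd_of_lt hdvd hlt)
  · refine ⟨(e : ZMod (d*e)), ?_, ?_⟩
    · rw [Ne, ZMod.natCast_eq_zero_iff]
      intro hdvd
      have := Nat.le_of_dvd he.pos hdvd
      nlinarith [hd.two_le, he.two_le]
    · rw [← Nat.cast_mul, ZMod.natCast_eq_zero_iff]
      exact Nat.mul_dvd_mul hdm dvd_rfl

/-- The list of nonzero multiples of `d` as vertices of the zero divisor graph of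
`ZMod n`, `n = d * e`. -/
def zdgList (hd : d.Prime) (he : e.Prime) (hde : d ≠ e) {n : ℕ} (hn : n = d * e) :
    List (ZDVertex n) :=
  (List.range (e-1)).pmap
    (fun j hj => id (α := ZDVertex n) (⟨(((j+1)*d : ℕ) : ZMod n), by
      subst hn
      have hjlt : j < e - 1 := List.mem_range.mp hj
      have h2 := hd.pos
      have h3 := he.two_le
      exact zdg_prop hd he hde _ (dvd_mul_left d (j+1))
        (by positivity) (by
          have h4 : j + 1 < e := by omega
          exact lt_of_lt_of_le (Nat.mul_lt_mul_of_pos_right h4 h2)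
            (Nat.le_of_eq (mul_comm e d)))⟩ : ZDVertex n))
    (fun _ h => h)

lemma zdg_list_length {n : ℕ} (hn : n = d * e) :
    (zdgList hd he hde hn).length = e - 1 := by simp [zdgList]

include hd he hde in
lemma zdg_list_val {n : ℕ} (hn : n = d * e) (j : ℕ) (hj : j < e - 1) :
    (((j+1)*d : ℕ) : ZMod n).val = (j+1)*d := by
  subst hn
  haveI := zdg_ne_zero hd he
  have h2 := hd.pos
  have h3 := he.two_le
  have h4 : j + 1 < e := by omega
  exact ZMod.val_cast_of_lt (by rw [mul_comm d e]; exact Nat.mul_lt_mul_of_pos_right h4 h2)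

lemma zdg_list_mem_iff {n : ℕ} (hn : n = d * e) (x : ZDVertex n) :
    x ∈ zdgList hd he hde hn ↔ d ∣ x.val.val := by
  haveI : NeZero n := hn ▸ zdg_ne_zero hd he
  constructor
  · rw [zdgList, List.mem_pmap]
    rintro ⟨j, hj, rfl⟩
    show d ∣ (((j+1)*d : ℕ) : ZMod n).val
    rw [zdg_list_val hd he hde hn j (List.mem_range.mp hj)]
    exact dvd_mul_left d (j+1)
  · intro hdvd
    obtain ⟨m, hm⟩ := hdvd
    have hm0 : m ≠ 0 := by
      rintro rfl
      rw [Nat.mul_zero] at hm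
      exact x.2.1 ((ZMod.val_eq_zero x.val).mp hm)
    have hmlt : m < e := by
      have := ZMod.val_lt x.val
      rw [hm, hn] at this
      exact lt_of_mul_lt_mul_left this (Nat.zero_le d)
    rw [zdgList, List.mem_pmap]
    refine ⟨m - 1, List.mem_range.mpr (by omega), ?_⟩
    apply Subtype.ext
    have h5 : (m - 1 + 1) * d = d * m := by
      rw [Nat.sub_add_cancel (Nat.one_le_iff_ne_zero.mpr hm0)]; ring
    show (((m - 1 + 1) * d : ℕ) : ZMod n) = x.val
    rw [h5, ← hm, ZMod.natCast_zmod_val]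

include hde in
lemma zdg_list_nodup {n : ℕ} (hn : n = d * e) : (zdgList hd he hde hn).Nodup := by
  haveI : NeZero n := hn ▸ zdg_ne_zero hd he
  refine List.Nodup.pmap ?_ List.nodup_range
  intro j hj j' hj' hEq
  have h1 : (((j+1)*d : ℕ) : ZMod n).val = (((j'+1)*d : ℕ) : ZMod n).val :=
    congrArg (fun z : ZDVertex n => z.val.val) hEq
  rw [zdg_list_val hd he hde hn j (List.mem_range.mp hj),
    zdg_list_val hd he hde hn j' (List.mem_range.mp hj')] at h1
  have h2 := Nat.eq_of_mul_eq_mul_right hd.pos h1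
  omega

include hd he hde in
lemma zdg_odd_of_eulerian (h : (zeroDivisorGraph (d*e)).IsEulerianGraph) : Odd d := by
  haveI := zdg_ne_zero hd he
  obtain ⟨v, w, hE, -⟩ := h
  have hlt : d < d * e := by
    calc d = d * 1 := (mul_one d).symm
      _ < d * e := Nat.mul_lt_mul_of_pos_left he.one_lt hd.pos
  have hx0prop := zdg_prop hd he hde d dvd_rfl hd.pos.ne' hlt
  set x0 : ZDVertex (d*e) := ⟨(d : ZMod (d*e)), hx0prop⟩ with hx0
  have hval : x0.val.val = d := ZMod.val_cast_of_lt hlt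
  have hdeg : (zeroDivisorGraph (d*e)).degree x0 = d - 1 := by
    have hset : (zeroDivisorGraph (d*e)).neighborFinset x0
        = (zdgList he hd hde.symm (mul_comm d e)).toFinset := by
      ext y
      rw [SimpleGraph.mem_neighborFinset, List.mem_toFinset,
        zdg_list_mem_iff he hd hde.symm (mul_comm d e) y]
      constructor
      · intro hadj
        rcases zdg_adj_dvd hd he hadj with ⟨-, h2⟩ | ⟨h1, -⟩
        · exact h2
        · exfalso
          rw [hval] at h1
          exact hde ((Nat.prime_dvd_prime_iff_eq he hd).mp h1).symm
      · intro hdvd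
        exact zdg_adj_of_dvd hd he hde (by rw [hval]) hdvd
    rw [← SimpleGraph.card_neighborFinset_eq_degree, hset,
      List.toFinset_card_of_nodup (zdg_list_nodup he hd hde.symm _),
      zdg_list_length he hd hde.symm]
  have hev : Even ((zeroDivisorGraph (d*e)).degree x0) :=
    (Walk.IsEulerian.even_degree_iff hE).mpr (fun hvv => absurd rfl hvv)
  rw [hdeg] at hev
  obtain ⟨k, hk⟩ := hev
  have := hd.two_le
  exact ⟨k, by omega⟩

include hd he hde in
lemma zdg_eulerian (hod : Odd d) (hoe : Odd e) :
    (zeroDivisorGraph (d*e)).IsEulerianGraph := by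
  haveI := zdg_ne_zero hd he
  have hco : Nat.Coprime d e := (Nat.coprime_primes hd he).mpr hde
  refine zdg_eulerian_of_bipartite (zdgList hd he hde rfl)
    (zdgList he hd hde.symm (mul_comm d e))
    (zdg_list_nodup hd he hde rfl) (zdg_list_nodup he hd hde.symm _) ?_ ?_ ?_ ?_ ?_ ?_ ?_
  · intro x hxA hxB
    rw [zdg_list_mem_iff hd he hde rfl] at hxA
    rw [zdg_list_mem_iff he hd hde.symm (mul_comm d e)] at hxB
    have : d * e ∣ x.val.val := Nat.Coprime.mul_dvd_of_dvd_of_dvd hco hxA hxB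
    have h0 : x.val.val = 0 := Nat.eq_zero_of_dvd_of_lt this (ZMod.val_lt x.val)
    exact x.2.1 ((ZMod.val_eq_zero x.val).mp h0)
  · intro a ha b hb
    rw [zdg_list_mem_iff hd he hde rfl] at ha
    rw [zdg_list_mem_iff he hd hde.symm (mul_comm d e)] at hb
    exact zdg_adj_of_dvd hd he hde ha hb
  · intro ed hed
    induction ed using Sym2.ind with
    | _ x y =>
      rw [SimpleGraph.mem_edgeSet] at hed
      rcases zdg_adj_dvd hd he hed with ⟨h1, h2⟩ | ⟨h1, h2⟩
      · exact ⟨x, (zdg_list_mem_iff hd he hde rfl x).mpr h1,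
          y, (zdg_list_mem_iff he hd hde.symm (mul_comm d e) y).mpr h2, rfl⟩
      · exact ⟨y, (zdg_list_mem_iff hd he hde rfl y).mpr h2,
          x, (zdg_list_mem_iff he hd hde.symm (mul_comm d e) x).mpr h1, Sym2.eq_swap⟩
  · rw [zdg_list_length hd he hde]
    obtain ⟨k, hk⟩ := hoe
    exact ⟨k, by omega⟩
  · rw [zdg_list_length he hd hde.symm]
    obtain ⟨k, hk⟩ := hod
    exact ⟨k, by omega⟩
  · intro hnil
    have h1 := zdg_list_length hd he hde (rfl : d*e = d*e)
    rw [hnil] at h1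
    have := he.two_le
    simp at h1
    omega
  · intro hnil
    have h1 := zdg_list_length he hd hde.symm (mul_comm d e)
    rw [hnil] at h1
    have := hd.two_le
    simp at h1
    omega

end Concrete

/-- For distinct primes `p` and `q`, the zero divisor graph of
`ZMod (p*q)` is Eulerian iff both `p` and `q` are odd. -/
theorem zeroDivisorGraph_pq_eulerian_iff (p q : ℕ) (hp : p.Prime) (hq : q.Prime)
    (hpq : p ≠ q) :
    (zeroDivisorGraph (p * q)).IsEulerianGraph ↔ Odd p ∧ Odd q := by
  constructor
  · intro h
    have h' := h
    rw [mul_comm p q] at h'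
    exact ⟨zdg_odd_of_eulerian hp hq hpq h, zdg_odd_of_eulerian hq hp hpq.symm h'⟩
  · rintro ⟨hop, hoq⟩
    exact zdg_eulerian hp hq hpq hop hoq
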